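/- arXiv:1009.0358 — 3 statements merged into one kernel-verified Lean document; each statement's English description precedes it below -/
import Mathlib

section
/- Let H be a trigraph in which every vertex of X ⊆ V(H) has a strong loop and no vertex of Y ⊆ V(H) has any loop (weak or strong). If a digraph G admits both a homomorphism to the induced subtrigraph H[X] and a homomorphism to the induced subtrigraph H[Y], then |V(G)| ≤ |X| · |Y|. -/
/-! Two vertices of `G` with the same image under both homomorphisms would have to be adjacent,
since they land on a strong loop in `H[X]`, and non-adjacent, since they land on a loopless
vertex of `H[Y]`. So `u ↦ (g u, h u)` embeds `V(G)` into `X × Y`. -/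

structure Trigraph (V : Type*) where
  W : V → V → Prop
  S : V → V → Prop
  disj : ∀ x y, ¬ (W x y ∧ S x y)

def Trigraph.Edge {V : Type*} (H : Trigraph V) (x y : V) : Prop := H.W x y ∨ H.S x y

def IsTriHom {U V : Type*} (E : U → U → Prop) (H : Trigraph V) (f : U → V) : Prop :=
  ∀ u v, u ≠ v → (E u v → H.Edge (f u) (f v)) ∧ (¬ E u v → ¬ H.S (f u) (f v))

namespace IsTriHom

variable {U V : Type*} {E : U → U → Prop} {H : Trigraph V} {f : U → V} {u v : U}

theorem adj_of_map_eq_of_strong_loop (hf : IsTriHom E H f) (huv : u ≠ v) (hfuv : f u = f v)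
    (hS : H.S (f u) (f u)) : E u v :=
  by_contra fun hE => (hf u v huv).2 hE (hfuv ▸ hS)

theorem not_adj_of_map_eq_of_loopless (hf : IsTriHom E H f) (huv : u ≠ v) (hfuv : f u = f v)
    (hloop : ¬ H.Edge (f u) (f u)) : ¬ E u v := fun hE =>
  hloop (hfuv ▸ (hf u v huv).1 hE)

theorem injective_prodMk_of_strong_loops_of_loopless {V' : Type*} {H' : Trigraph V'} {g : U → V'}
    (hf : IsTriHom E H f) (hg : IsTriHom E H' g) (hfS : ∀ u, H.S (f u) (f u))
    (hgloop : ∀ u, ¬ H'.Edge (g u) (g u)) : Function.Injective fun u => (f u, g u) := by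
  intro u v huv
  obtain ⟨hfuv, hguv⟩ := Prod.mk.inj huv
  by_contra huv
  exact hg.not_adj_of_map_eq_of_loopless huv hguv (hgloop u)
    (hf.adj_of_map_eq_of_strong_loop huv hfuv (hfS u))

end IsTriHom

/-- if every vertex of `X` has a strong loop, no vertex of `Y` has any
loop, and `G` admits homomorphisms both to `H[X]` and to `H[Y]`, then
`|V(G)| ≤ |X| ⬝ |Y|`. -/
theorem card_le_of_hom_sparse_dense
    {U V : Type*} [Fintype U] (E : U → U → Prop) (H : Trigraph V)
    (X Y : Finset V)
    (hX : ∀ x ∈ X, H.S x x)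
    (hY : ∀ y ∈ Y, ¬ H.W y y ∧ ¬ H.S y y)
    (g : U → V) (hg : IsTriHom E H g) (hgX : ∀ u, g u ∈ X)
    (h : U → V) (hh : IsTriHom E H h) (hhY : ∀ u, h u ∈ Y) :
    Fintype.card U ≤ X.card * Y.card := by
  have hinj := hg.injective_prodMk_of_strong_loops_of_loopless hh (fun u => hX _ (hgX u))
    fun u => not_or.2 (hY _ (hhY u))
  rw [← Finset.card_product, ← Finset.card_univ]
  exact Finset.card_le_card_of_injOn _ (fun u _ => Finset.mem_product.2 ⟨hgX u, hhY u⟩)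
    hinj.injOn
end

section
/- Let G' be a minimal chordal completion of a graph G, and let C be a clique of G. Then there are no edges in G' between vertices lying in different connected components of G − C. -/
/-!
Delete from `G'` every edge joining two different components of `G − C`. The resulting graph
still contains `G`, and it is still chordal: a cycle through vertices of two different components
must cross `C` on both arcs between them, and the two vertices of `C` so found are distinct and
not consecutive on the cycle, hence joined by a chord because `C` is a clique. Minimality of `G'`
then says that nothing was deleted.
-/

/-- A graph is chordal if every (injective) cycle of length at least 4 has a
chord, i.e. there is no induced cycle of length four or more. -/
def IsChordal {V : Type*} (G : SimpleGraph V) : Prop :=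
  ∀ (n : ℕ) (f : ZMod n → V), 4 ≤ n → Function.Injective f →
    (∀ i, G.Adj (f i) (f (i + 1))) →
    ∃ i j : ZMod n, j ≠ i + 1 ∧ i ≠ j + 1 ∧ i ≠ j ∧ G.Adj (f i) (f j)

theorem ZMod.natCast_ne_natCast_of_pos_of_lt {n a c : ℕ} (ha : 0 < a) (hac : a < c)
    (hc : c ≤ n) : (a : ZMod n) ≠ c := by
  rw [Ne, ZMod.natCast_eq_natCast_iff' a c n]
  rcases hc.lt_or_eq with hc | rfl
  · rw [Nat.mod_eq_of_lt (hac.trans hc), Nat.mod_eq_of_lt hc]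
    exact hac.ne
  · rw [Nat.mod_self, Nat.mod_eq_of_lt hac]
    exact ha.ne'

namespace SimpleGraph

variable {V : Type*}

def cutBetweenComponents (G H : SimpleGraph V) (C : Set V) : SimpleGraph V where
  Adj a b := G.Adj a b ∧ (a ∈ C ∨ b ∈ C ∨ H.Reachable a b)
  symm := ⟨fun _ _ h => ⟨h.1.symm, by
    rcases h.2 with ha | hb | hab
    exacts [Or.inr (Or.inl ha), Or.inl hb, Or.inr (Or.inr hab.symm)]⟩⟩
  loopless := ⟨fun a h => G.loopless.irrefl a h.1⟩

variable {G H K : SimpleGraph V} {C : Set V}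

theorem cutBetweenComponents_adj {a b : V} :
    (G.cutBetweenComponents H C).Adj a b ↔ G.Adj a b ∧ (a ∈ C ∨ b ∈ C ∨ H.Reachable a b) :=
  Iff.rfl

theorem cutBetweenComponents_le : G.cutBetweenComponents H C ≤ G :=
  fun _ _ h => (cutBetweenComponents_adj.mp h).1

theorem le_cutBetweenComponents (hKG : K ≤ G)
    (hKH : ∀ a b, a ∉ C → b ∉ C → K.Adj a b → H.Adj a b) :
    K ≤ G.cutBetweenComponents H C := by
  intro a b hab
  refine cutBetweenComponents_adj.mpr ⟨hKG hab, ?_⟩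
  by_cases ha : a ∈ C
  · exact Or.inl ha
  by_cases hb : b ∈ C
  · exact Or.inr (Or.inl hb)
  exact Or.inr (Or.inr (hKH a b ha hb hab).reachable)

theorem exists_mem_of_not_reachable {g : ℕ → V} {lo hi : ℕ} (hlohi : lo ≤ hi)
    (hstep : ∀ m, g m ∉ C → g (m + 1) ∉ C → H.Reachable (g m) (g (m + 1)))
    (hlo : g lo ∉ C) (hhi : g hi ∉ C) (hnr : ¬ H.Reachable (g lo) (g hi)) :
    ∃ m, lo < m ∧ m < hi ∧ g m ∈ C := by
  by_contra! hout
  have hout' : ∀ m, lo ≤ m → m ≤ hi → g m ∉ C := by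
    intro m hlom hmhi
    rcases hlom.eq_or_lt with rfl | hlom
    · exact hlo
    rcases hmhi.eq_or_lt with rfl | hmhi
    · exact hhi
    exact hout m hlom hmhi
  have hreach : ∀ m, lo ≤ m → m ≤ hi → H.Reachable (g lo) (g m) := by
    intro m hlom
    induction m, hlom using Nat.le_induction with
    | base => exact fun _ => Reachable.refl _
    | succ m hlom ih =>
      intro hm
      exact (ih (Nat.le_of_succ_le hm)).trans
        (hstep m (hout' m hlom (Nat.le_of_succ_le hm)) (hout' (m + 1) (hlom.trans m.le_succ) hm))
  exact hnr (hreach hi hlohi le_rfl)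

theorem exists_chord_of_not_reachable {n : ℕ} [NeZero n] {f : ZMod n → V}
    (hf : Function.Injective f) (hC : G.IsClique C)
    (hcyc : ∀ i, (G.cutBetweenComponents H C).Adj (f i) (f (i + 1)))
    {i₀ j₀ : ZMod n} (hi₀ : f i₀ ∉ C) (hj₀ : f j₀ ∉ C) (hnr : ¬ H.Reachable (f i₀) (f j₀)) :
    ∃ i j : ZMod n, j ≠ i + 1 ∧ i ≠ j + 1 ∧ i ≠ j ∧
      (G.cutBetweenComponents H C).Adj (f i) (f j) := by
  set g : ℕ → V := fun m => f (i₀ + m) with hg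
  have hstep : ∀ m, g m ∉ C → g (m + 1) ∉ C → H.Reachable (g m) (g (m + 1)) := by
    intro m hm hm'
    simp only [hg, Nat.cast_succ, ← add_assoc] at hm hm' ⊢
    rcases (cutBetweenComponents_adj.mp (hcyc (i₀ + m))).2 with h | h | h
    exacts [absurd h hm, absurd h hm', h]
  set k := (j₀ - i₀).val
  have hkn : k < n := ZMod.val_lt _
  have hg0 : g 0 = f i₀ := by simp [hg]
  have hgk : g k = f j₀ := by simp [hg, k]
  have hgn : g n = f i₀ := by simp [hg]
  obtain ⟨a, ha, hak, haC⟩ := exists_mem_of_not_reachable (lo := 0) k.zero_le hstep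
    (by rwa [hg0]) (by rwa [hgk]) (by rwa [hg0, hgk])
  obtain ⟨b, hkb, hbn, hbC⟩ := exists_mem_of_not_reachable (lo := k) hkn.le hstep
    (by rwa [hgk]) (by rwa [hgn]) (by rw [hgk, hgn]; exact fun h => hnr h.symm)
  have hab : i₀ + a ≠ i₀ + b := fun h =>
    ZMod.natCast_ne_natCast_of_pos_of_lt ha (hak.trans hkb) hbn.le (add_left_cancel h)
  refine ⟨i₀ + a, i₀ + b, fun h => ?_, fun h => ?_, hab, hC haC hbC (hf.ne hab), Or.inl haC⟩
  · refine ZMod.natCast_ne_natCast_of_pos_of_lt a.succ_pos (by omega) hbn.le ?_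
    push_cast
    linear_combination -h
  · refine ZMod.natCast_ne_natCast_of_pos_of_lt ha (by omega) hbn ?_
    push_cast
    linear_combination h

theorem isChordal_cutBetweenComponents (hG : IsChordal G) (hC : G.IsClique C) :
    IsChordal (G.cutBetweenComponents H C) := by
  intro n f hn hf hcyc
  have : NeZero n := ⟨by omega⟩
  by_cases hall : ∀ i j, f i ∉ C → f j ∉ C → H.Reachable (f i) (f j)
  · obtain ⟨i, j, hji, hij, hne, hadj⟩ :=
      hG n f hn hf fun i => (cutBetweenComponents_adj.mp (hcyc i)).1
    refine ⟨i, j, hji, hij, hne, cutBetweenComponents_adj.mpr ⟨hadj, ?_⟩⟩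
    by_cases hi : f i ∈ C
    · exact Or.inl hi
    by_cases hj : f j ∈ C
    · exact Or.inr (Or.inl hj)
    exact Or.inr (Or.inr (hall i j hi hj))
  · push Not at hall
    obtain ⟨i₀, j₀, hi₀, hj₀, hnr⟩ := hall
    exact exists_chord_of_not_reachable hf hC hcyc hi₀ hj₀ hnr

end SimpleGraph

/-- in a minimal chordal completion `G'` of `G`, there are no
edges between vertices of different connected components of `G - C`,
for any clique `C` of `G`. -/
theorem minimal_chordal_completion_no_edges_between_components
    {V : Type*} (G G' : SimpleGraph V)
    (hle : G ≤ G') (hch : IsChordal G')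
    (hmin : ∀ G'' : SimpleGraph V, G ≤ G'' → IsChordal G'' → G'' ≤ G' → G'' = G')
    (C : Set V) (hC : G.IsClique C) :
    ∀ u v : V, u ∉ C → v ∉ C →
      ¬ Relation.ReflTransGen (fun a b => a ∉ C ∧ b ∉ C ∧ G.Adj a b) u v →
      ¬ G'.Adj u v := by
  intro u v hu hv hnot hadj
  let GminusC := ((⊤ : G.Subgraph).deleteVerts C).spanningCoe
  have hGminusC : GminusC.Adj = fun a b => a ∉ C ∧ b ∉ C ∧ G.Adj a b := by
    ext a b
    simp [GminusC]
  have hGle : G ≤ G'.cutBetweenComponents GminusC C :=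
    SimpleGraph.le_cutBetweenComponents hle fun a b ha hb hab => by
      rw [hGminusC]
      exact ⟨ha, hb, hab⟩
  have hcut := hmin _ hGle (SimpleGraph.isChordal_cutBetweenComponents hch (hC.mono hle))
    SimpleGraph.cutBetweenComponents_le
  rw [← hcut] at hadj
  rcases (SimpleGraph.cutBetweenComponents_adj.mp hadj).2 with huC | hvC | hreach
  · exact hu huC
  · exact hv hvC
  · rw [SimpleGraph.reachable_iff_reflTransGen, hGminusC] at hreach
    exact hnot hreach
end

section
/- Let H be a trigraph, G a digraph with lists L that are arc-consistent and contain representatives. Let x, y be vertices of H such that y weakly dominates x. Suppose t is a vertex of H with xt ∈ S(H), yt not an edge of H, and t appears on some list. Then no list L(u) contains both x and y. -/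
def ArcConsistent {U V : Type*} (E : U → U → Prop) (H : Trigraph V)
    (L : U → Set V) : Prop :=
  ∀ u v, u ≠ v → ∀ x ∈ L u, ∃ y ∈ L v,
    (E u v → H.Edge x y) ∧ (E v u → H.Edge y x) ∧
    (¬ E u v → ¬ H.S x y) ∧ (¬ E v u → ¬ H.S y x)

/-- Lists contain representatives: all lists live in a set `X ⊆ V(H)` and each
element of `X` is the full list of some vertex of `G`. -/
def ContainsRepresentatives {U V : Type*} (L : U → Set V) : Prop :=
  ∃ X : Set V, (∀ u, L u ⊆ X) ∧ ∀ x ∈ X, ∃ v, L v = {x}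

def WeaklyDominates {V : Type*} (H : Trigraph V) (y x : V) : Prop :=
  ∀ z, (H.W z x → H.W z y) ∧ (H.W x z → H.W y z)

theorem ContainsRepresentatives.exists_eq_singleton {U V : Type*} {L : U → Set V}
    (hrep : ContainsRepresentatives L) {t : V} {w : U} (ht : t ∈ L w) : ∃ v, L v = {t} := by
  obtain ⟨X, hLX, hX⟩ := hrep
  exact hX t (hLX w ht)

namespace ArcConsistent

variable {U V : Type*} {E : U → U → Prop} {H : Trigraph V} {L : U → Set V}
  {u v : U} {x t : V}

theorem edge_of_eq_singleton (hac : ArcConsistent E H L) (huv : u ≠ v) (hv : L v = {t})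
    (hx : x ∈ L u) : (E u v → H.Edge x t) ∧ (¬ E u v → ¬ H.S x t) := by
  obtain ⟨b, hb, hE, -, hNE, -⟩ := hac u v huv x hx
  obtain rfl : b = t := by rwa [hv, Set.mem_singleton_iff] at hb
  exact ⟨hE, hNE⟩

theorem adj_of_strong_of_eq_singleton (hac : ArcConsistent E H L) (huv : u ≠ v)
    (hv : L v = {t}) (hx : x ∈ L u) (hst : H.S x t) : E u v :=
  by_contra fun h => (hac.edge_of_eq_singleton huv hv hx).2 h hst

end ArcConsistent

theorem no_list_contains_both_general
    {U V : Type*} (E : U → U → Prop) (H : Trigraph V) (L : U → Set V)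
    (hac : ArcConsistent E H L) (hrep : ContainsRepresentatives L)
    (x y : V)
    (t : V) (hst : H.S x t) (hyt : ¬ H.Edge y t) (ht : ∃ w, t ∈ L w) :
    ∀ u, ¬ (x ∈ L u ∧ y ∈ L u) := by
  rintro u ⟨hx, hy⟩
  obtain ⟨w, htw⟩ := ht
  obtain ⟨v, hv⟩ := hrep.exists_eq_singleton htw
  by_cases huv : u = v
  · subst huv
    rw [hv, Set.mem_singleton_iff] at hx hy
    subst hx hy
    exact hyt (Or.inr hst)
  · have hE : E u v := hac.adj_of_strong_of_eq_singleton huv hv hx hst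
    exact hyt ((hac.edge_of_eq_singleton huv hv hy).1 hE)

/-- with arc-consistent lists containing representatives, if `y`
weakly dominates `x`, `xt` is a strong edge, `yt` is not an edge, and `t`
appears on some list, then no list contains both `x` and `y`. -/
theorem no_list_contains_both
    {U V : Type*} (E : U → U → Prop) (H : Trigraph V) (L : U → Set V)
    (hac : ArcConsistent E H L) (hrep : ContainsRepresentatives L)
    (x y : V) (hdom : WeaklyDominates H y x)
    (t : V) (hst : H.S x t) (hyt : ¬ H.Edge y t) (ht : ∃ w, t ∈ L w) :
    ∀ u, ¬ (x ∈ L u ∧ y ∈ L u) :=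
  no_list_contains_both_general E H L hac hrep x y t hst hyt ht
end
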